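/- Let Ω ⊆ ℝ^n be open and let u, φ be C² on Ω with φ > 0. Then pointwise on Ω: |∇u|⁸ + (Δφ/φ + 68) u⁸ = ( |∇u|⁴ − 8u⁴ )² + ( |∇(u²)|² − 2u⁴ )² + |∇(u⁴) − (∇φ/φ) u⁴|² + div((∇φ/φ) u⁸). -/

import Mathlib

/-!
By the chain rule `∇(u^k) = k u^(k-1) ∇u`, and by the product rule
`div (f V) = f div V + ⟪∇f, V⟫` with `f = u⁸/φ` and `V = ∇φ`, every derivative on the right-hand
side is expressed through `∇u`, `∇φ` and `Δφ`. What is left is an algebraic identity: the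
`u⁶ |∇u|²` terms of the second and third squares cancel, as do the `⟪∇u, ∇φ⟫` and `|∇φ|²` terms
of the third square and the divergence, and the coefficient of `u⁸` is `64 + 4 = 68`.
-/

open MeasureTheory Finset
open scoped RealInnerProductSpace

noncomputable def grad {n : ℕ} (f : EuclideanSpace ℝ (Fin n) → ℝ) :
    EuclideanSpace ℝ (Fin n) → EuclideanSpace ℝ (Fin n) :=
  fun x => gradient f x

noncomputable def dvg {n : ℕ} (V : EuclideanSpace ℝ (Fin n) → EuclideanSpace ℝ (Fin n)) :
    EuclideanSpace ℝ (Fin n) → ℝ :=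
  fun x => ∑ i, fderiv ℝ V x (EuclideanSpace.single i 1) i

noncomputable def lap {n : ℕ} (f : EuclideanSpace ℝ (Fin n) → ℝ) :
    EuclideanSpace ℝ (Fin n) → ℝ :=
  dvg (grad f)

section GradientCalculus

variable {F : Type*} [NormedAddCommGroup F] [InnerProductSpace ℝ F] [CompleteSpace F]
  {f g : F → ℝ} {f' g' x : F}

theorem HasDerivAt.comp_hasGradientAt {h : ℝ → ℝ} {h' : ℝ} (hh : HasDerivAt h h' (f x))
    (hf : HasGradientAt f f' x) : HasGradientAt (fun y => h (f y)) (h' • f') x := by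
  rw [hasGradientAt_iff_hasFDerivAt, map_smulₛₗ]
  exact hh.comp_hasFDerivAt x hf.hasFDerivAt

theorem HasGradientAt.mul (hf : HasGradientAt f f' x) (hg : HasGradientAt g g' x) :
    HasGradientAt (fun y => f y * g y) (f x • g' + g x • f') x := by
  rw [hasGradientAt_iff_hasFDerivAt, map_add, map_smulₛₗ, map_smulₛₗ]
  exact hf.hasFDerivAt.mul hg.hasFDerivAt

theorem HasGradientAt.div (hf : HasGradientAt f f' x) (hg : HasGradientAt g g' x) (hx : g x ≠ 0) :
    HasGradientAt (fun y => f y / g y) ((g x)⁻¹ • f' - (f x / g x ^ 2) • g') x := by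
  have hmul := hf.mul ((hasDerivAt_inv hx).comp_hasGradientAt hg)
  convert hmul using 1
  · simp only [div_eq_mul_inv]
  · rw [smul_smul]
    module

end GradientCalculus

section EuclideanCalculus

variable {n : ℕ} {f : EuclideanSpace ℝ (Fin n) → ℝ} {x : EuclideanSpace ℝ (Fin n)}

theorem fderiv_single_eq_grad (i : Fin n) :
    fderiv ℝ f x (EuclideanSpace.single i 1) = grad f x i := by
  rw [← inner_gradient_left, EuclideanSpace.inner_single_right, one_mul]
  rfl

theorem ContDiffAt.differentiableAt_grad (hf : ContDiffAt ℝ 2 f x) :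
    DifferentiableAt ℝ (grad f) x :=
  (InnerProductSpace.toDual ℝ _).symm.differentiableAt.comp x
    ((hf.fderiv_right (by norm_num)).differentiableAt one_ne_zero)

theorem HasGradientAt.grad {f' : EuclideanSpace ℝ (Fin n)} (h : HasGradientAt f f' x) :
    grad f x = f' :=
  h.gradient

theorem dvg_smul {V : EuclideanSpace ℝ (Fin n) → EuclideanSpace ℝ (Fin n)}
    (hf : DifferentiableAt ℝ f x) (hV : DifferentiableAt ℝ V x) :
    dvg (fun y => f y • V y) x = f x * dvg V x + ⟪grad f x, V x⟫ := by
  rw [real_inner_comm]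
  simp only [dvg, fderiv_fun_smul hf hV, add_apply, smul_apply,
    ContinuousLinearMap.smulRight_apply, fderiv_single_eq_grad, PiLp.add_apply, PiLp.smul_apply,
    smul_eq_mul, Finset.sum_add_distrib, Finset.mul_sum, PiLp.inner_apply, RCLike.inner_apply,
    conj_trivial]

end EuclideanCalculus

theorem friedrichs_eight_identity {F : Type*} [NormedAddCommGroup F] [InnerProductSpace ℝ F]
    (a b : F) (U Φ L : ℝ) (hΦ : Φ ≠ 0) :
    ‖a‖ ^ 8 + (L / Φ + 68) * U ^ 8 =
      (‖a‖ ^ 4 - 8 * U ^ 4) ^ 2 + (‖(2 * U) • a‖ ^ 2 - 2 * U ^ 4) ^ 2 +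
        ‖(4 * U ^ 3) • a - (U ^ 4 / Φ) • b‖ ^ 2 +
      (U ^ 8 / Φ * L + ⟪Φ⁻¹ • (8 * U ^ 7) • a - (U ^ 8 / Φ ^ 2) • b, b⟫) := by
  simp only [norm_sub_sq_real, inner_sub_left, real_inner_smul_left, real_inner_smul_right,
    real_inner_self_eq_norm_sq, norm_smul, Real.norm_eq_abs, mul_pow, sq_abs]
  field_simp
  ring

theorem stmt9 {n : ℕ} (Ω : Set (EuclideanSpace ℝ (Fin n))) (hΩ : IsOpen Ω)
    (u φ : EuclideanSpace ℝ (Fin n) → ℝ)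
    (hu : ContDiffOn ℝ 2 u Ω) (hφ : ContDiffOn ℝ 2 φ Ω)
    (hφpos : ∀ x ∈ Ω, 0 < φ x) :
    ∀ x ∈ Ω,
      ‖grad u x‖ ^ 8 + (lap φ x / φ x + 68) * (u x) ^ 8 =
        (‖grad u x‖ ^ 4 - 8 * (u x) ^ 4) ^ 2 +
        (‖grad (fun y => (u y) ^ 2) x‖ ^ 2 - 2 * (u x) ^ 4) ^ 2 +
        ‖grad (fun y => (u y) ^ 4) x - ((u x) ^ 4 / φ x) • grad φ x‖ ^ 2 +
        dvg (fun y => ((u y) ^ 8 / φ y) • grad φ y) x := by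
  intro x hx
  have hφ2 : ContDiffAt ℝ 2 φ x := hφ.contDiffAt (hΩ.mem_nhds hx)
  have hgu : HasGradientAt u (grad u x) x :=
    ((hu.contDiffAt (hΩ.mem_nhds hx)).differentiableAt two_ne_zero).hasGradientAt
  have hgφ : HasGradientAt φ (grad φ x) x := (hφ2.differentiableAt two_ne_zero).hasGradientAt
  have hpow (k : ℕ) := (hasDerivAt_pow k (u x)).comp_hasGradientAt hgu
  have hquot := (hpow 8).div hgφ (hφpos x hx).ne'
  rw [(hpow 2).grad, (hpow 4).grad, dvg_smul hquot.differentiableAt hφ2.differentiableAt_grad,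
    hquot.grad]
  norm_num only [pow_one]
  exact friedrichs_eight_identity (grad u x) (grad φ x) (u x) (φ x) (lap φ x) (hφpos x hx).ne'
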